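/- arXiv:2111.02553 — 4 statements merged into one kernel-verified Lean document; each statement's English description precedes it below -/
import Mathlib

section
/- Every solution of the recurrence n α_{n+2} = 2(n+1) α_{n+1} - (n+2) α_n with integer initial values α_1, α_2 consists entirely of integers. -/
/-!
Writing the recurrence as `n (α (n+2) - α (n+1)) = (n+2) (α (n+1) - α n)` shows that the
differences are `(α 2 - α 1)` times the triangular numbers `C(n+1, 2)`; summing them gives
`α n = α 1 + (α 2 - α 1) C(n+1, 3)`, visibly an integer.
-/

section Recurrence

variable {K : Type*} [Field K] [CharZero K] {α : ℕ → K}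

theorem sub_eq_mul_choose_two_of_recurrence
    (hrec : ∀ n : ℕ, 1 ≤ n →
      (n : K) * α (n + 2) = 2 * ((n : K) + 1) * α (n + 1) - ((n : K) + 2) * α n) :
    ∀ n : ℕ, 1 ≤ n → α (n + 1) - α n = (α 2 - α 1) * ((n + 1).choose 2 : ℕ) := by
  refine Nat.le_induction (by simp) fun n hn ih => ?_
  have hn0 : (n : K) ≠ 0 := Nat.cast_ne_zero.mpr (by omega)
  have hshift : (n : K) * (α (n + 2) - α (n + 1)) = ((n : K) + 2) * (α (n + 1) - α n) := by
    linear_combination hrec n hn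
  rw [ih] at hshift
  apply mul_left_cancel₀ hn0
  rw [show n + 1 + 1 = n + 2 from rfl, hshift, Nat.cast_choose_two, Nat.cast_choose_two]
  push_cast
  ring

theorem eq_add_mul_choose_three_of_recurrence
    (hrec : ∀ n : ℕ, 1 ≤ n →
      (n : K) * α (n + 2) = 2 * ((n : K) + 1) * α (n + 1) - ((n : K) + 2) * α n) :
    ∀ n : ℕ, 1 ≤ n → α n = α 1 + (α 2 - α 1) * ((n + 1).choose 3 : ℕ) := by
  refine Nat.le_induction (by simp) fun n hn ih => ?_
  rw [Nat.choose_succ_succ' (n + 1) 2, Nat.cast_add]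
  linear_combination ih + sub_eq_mul_choose_two_of_recurrence hrec n hn

end Recurrence

/-- Every rational solution of `n α (n+2) = 2(n+1) α (n+1) - (n+2) α n` with
integer initial values `α 1, α 2` consists entirely of integers. -/
theorem stmt5 (α : ℕ → ℚ)
    (hrec : ∀ n : ℕ, 1 ≤ n →
      (n : ℚ) * α (n + 2) = 2 * ((n : ℚ) + 1) * α (n + 1) - ((n : ℚ) + 2) * α n)
    (h1 : ∃ z : ℤ, α 1 = z) (h2 : ∃ z : ℤ, α 2 = z) :
    ∀ n : ℕ, 1 ≤ n → ∃ z : ℤ, α n = z := by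
  obtain ⟨z₁, hz₁⟩ := h1
  obtain ⟨z₂, hz₂⟩ := h2
  intro n hn
  refine ⟨z₁ + (z₂ - z₁) * ((n + 1).choose 3 : ℕ), ?_⟩
  rw [eq_add_mul_choose_three_of_recurrence hrec n hn, hz₁, hz₂]
  push_cast
  ring
end

section
/- The Fibonacci self-convolution φ_n = Σ_{k=1}^{n-1} F_k F_{n-k} (OEIS A001629, with φ_1 = 0, φ_2 = 1) satisfies the shadow recurrence F_n φ_{n+2} = 2 F_{n+1} φ_{n+1} - F_{n+2} φ_n for all n ≥ 1. -/
/-!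
Peeling the last two terms of the convolution and applying `F (k + 2) = F (k + 1) + F k` to the
rest gives `φ (n + 2) = φ (n + 1) + φ n + F (n + 1)`, and induction then yields the closed form
`5 φ n = 2 n F (n + 1) - (n + 1) F n` (that is, `5 φ n = n L n - F n` with `L` the Lucas numbers).
Substituting it, the shadow recurrence becomes a polynomial identity in `F n` and `F (n + 1)`.
-/

open Finset
open Nat (fib fib_add_two)

def fibConv (n : ℕ) : ℤ := ∑ k ∈ Ico 1 n, (fib k : ℤ) * fib (n - k)

lemma fibConv_add_two (n : ℕ) :
    fibConv (n + 2) = fibConv (n + 1) + fibConv n + fib (n + 1) := by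
  have split : ∀ k ∈ Ico 1 (n + 1),
      (fib k : ℤ) * fib (n + 2 - k) = fib k * fib (n + 1 - k) + fib k * fib (n - k) := by
    intro k hk
    rw [show n + 2 - k = n - k + 2 by grind, show n + 1 - k = n - k + 1 by grind, fib_add_two]
    push_cast
    ring
  have drop_top : ∑ k ∈ Ico 1 (n + 1), (fib k : ℤ) * fib (n - k) = fibConv n := by
    refine (sum_subset (Ico_subset_Ico_right n.le_succ) fun k hk hk' => ?_).symm
    obtain rfl : k = n := by grind
    simp
  rw [fibConv, sum_Ico_succ_top (by omega), sum_congr rfl split, sum_add_distrib, drop_top]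
  simp [fibConv]

lemma five_mul_fibConv (n : ℕ) :
    5 * fibConv n = 2 * n * fib (n + 1) - (n + 1) * fib n := by
  induction n using Nat.twoStepInduction with
  | zero => simp [fibConv]
  | one => simp [fibConv]
  | more n ih₀ ih₁ =>
    have h₂ : (fib (n + 2) : ℤ) = fib n + fib (n + 1) := mod_cast fib_add_two
    have h₃ : (fib (n + 3) : ℤ) = fib (n + 1) + fib (n + 2) := mod_cast fib_add_two
    rw [fibConv_add_two]
    push_cast at ih₁ ⊢
    linear_combination (norm := ring_nf) ih₀ + ih₁ - (2 * n + 4) * h₃ + (n + 1) * h₂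

lemma fib_mul_fibConv_add_two (n : ℕ) :
    fib n * fibConv (n + 2) = 2 * fib (n + 1) * fibConv (n + 1) - fib (n + 2) * fibConv n := by
  have h₂ : (fib (n + 2) : ℤ) = fib n + fib (n + 1) := mod_cast fib_add_two
  have h₃ : (fib (n + 3) : ℤ) = fib (n + 1) + fib (n + 2) := mod_cast fib_add_two
  have c₀ := five_mul_fibConv n
  have c₁ := five_mul_fibConv (n + 1)
  have c₂ := five_mul_fibConv (n + 2)
  push_cast at c₁ c₂
  rw [h₂] at c₁
  rw [h₃, h₂] at c₂
  refine mul_left_cancel₀ (by norm_num : (5 : ℤ) ≠ 0) ?_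
  rw [h₂]
  linear_combination fib n * c₂ - 2 * fib (n + 1) * c₁ + (fib n + fib (n + 1)) * c₀

/-- The Fibonacci self-convolution `φ n = Σ_{k=1}^{n-1} F k * F (n-k)` satisfies the
shadow recurrence `F n * φ (n+2) = 2 F (n+1) φ (n+1) - F (n+2) φ n` for all `n ≥ 1`. -/
theorem stmt7 (φ : ℕ → ℤ)
    (hφ : ∀ n, φ n = ∑ k ∈ Finset.Ico 1 n, (Nat.fib k : ℤ) * Nat.fib (n - k)) :
    ∀ n : ℕ, 1 ≤ n →
      (Nat.fib n : ℤ) * φ (n + 2)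
        = 2 * (Nat.fib (n + 1) : ℤ) * φ (n + 1) - (Nat.fib (n + 2) : ℤ) * φ n := by
  obtain rfl : φ = fibConv := funext hφ
  intro n _
  exact fib_mul_fibConv_add_two n
end

section
/- Every rational sequence (φ_n) satisfying φ_{n+2} = (2 F_{n+1} φ_{n+1} - F_{n+2} φ_n)/F_n for n ≥ 1 with integer initial values φ_1, φ_2 takes only integer values. -/
/-!
Put `k_n = (2 φ_{n+1} - φ_n) / F_n`. Since `F_{n+2} = F_n + F_{n+1}`, the recurrence says
`φ_{n+2} = F_{n+1} k_n - φ_n`, and then `2 φ_{n+1} + φ_{n+2} = F_{n+2} k_n`. Hence the property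
"`φ_n, φ_{n+1}` are integers with `F_n ∣ 2 φ_{n+1} - φ_n` and `F_{n+1} ∣ 2 φ_n + φ_{n+1}`"
passes from `n` to `n + 1`; for `n = 1` it holds because `F_1 = F_2 = 1`.
-/

open Nat (fib fib_add_two fib_pos)

lemma eq_fib_mul_sub_of_fib_mul_eq {n : ℕ} (hn : 1 ≤ n) {r : ℚ} {x y k : ℤ}
    (hk : 2 * y - x = (fib n : ℤ) * k)
    (hrec : (fib n : ℚ) * r = 2 * (fib (n + 1) : ℚ) * y - (fib (n + 2) : ℚ) * x) :
    r = ((fib (n + 1) * k - x : ℤ) : ℚ) := by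
  have hF : (fib n : ℚ) ≠ 0 := by exact_mod_cast (fib_pos.mpr hn).ne'
  have hkQ : 2 * (y : ℚ) - x = fib n * k := by exact_mod_cast hk
  apply mul_left_cancel₀ hF
  rw [hrec, fib_add_two]
  push_cast
  linear_combination (fib (n + 1) : ℚ) * hkQ

def FibIntegralAt (φ : ℕ → ℚ) (n : ℕ) : Prop :=
  ∃ x y : ℤ, φ n = x ∧ φ (n + 1) = y ∧
    (fib n : ℤ) ∣ 2 * y - x ∧ (fib (n + 1) : ℤ) ∣ 2 * x + y

lemma fibIntegralAt_one {φ : ℕ → ℚ} (h1 : ∃ z : ℤ, φ 1 = z) (h2 : ∃ z : ℤ, φ 2 = z) :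
    FibIntegralAt φ 1 := by
  obtain ⟨a, ha⟩ := h1
  obtain ⟨b, hb⟩ := h2
  exact ⟨a, b, ha, hb, by simp, by simp⟩

lemma FibIntegralAt.succ {φ : ℕ → ℚ} {n : ℕ} (hn : 1 ≤ n) (h : FibIntegralAt φ n)
    (hrec : (fib n : ℚ) * φ (n + 2)
      = 2 * (fib (n + 1) : ℚ) * φ (n + 1) - (fib (n + 2) : ℚ) * φ n) :
    FibIntegralAt φ (n + 1) := by
  obtain ⟨x, y, hx, hy, ⟨k, hk⟩, ⟨j, hj⟩⟩ := h
  rw [hx, hy] at hrec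
  have hnext := eq_fib_mul_sub_of_fib_mul_eq hn hk hrec
  refine ⟨y, fib (n + 1) * k - x, hy, hnext, ⟨2 * k - j, by linear_combination -hj⟩, ⟨k, ?_⟩⟩
  rw [fib_add_two]
  push_cast
  linear_combination hk

/-- Every rational sequence satisfying `F n * φ (n+2) = 2 F (n+1) φ (n+1) - F (n+2) φ n`
with integer initial values `φ 1, φ 2` takes only integer values. -/
theorem stmt9 (φ : ℕ → ℚ)
    (hrec : ∀ n : ℕ, 1 ≤ n →
      (Nat.fib n : ℚ) * φ (n + 2)
        = 2 * (Nat.fib (n + 1) : ℚ) * φ (n + 1) - (Nat.fib (n + 2) : ℚ) * φ n)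
    (h1 : ∃ z : ℤ, φ 1 = z) (h2 : ∃ z : ℤ, φ 2 = z) :
    ∀ n : ℕ, 1 ≤ n → ∃ z : ℤ, φ n = z := by
  intro n hn
  have hinv : FibIntegralAt φ n := by
    induction n, hn using Nat.le_induction with
    | base => exact fibIntegralAt_one h1 h2
    | succ m hm ih => exact ih.succ hm (hrec m hm)
  obtain ⟨x, -, hx, -⟩ := hinv
  exact ⟨x, hx⟩
end

section
/- For all n ≥ 1, the triple (2, P_{2n-1}, P_{2n+1}) of Pell numbers satisfies the Markov equation: 4 + P_{2n-1}² + P_{2n+1}² = 6 P_{2n-1} P_{2n+1}. -/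
/-- The Pell numbers: `P 0 = 0`, `P 1 = 1`, `P (n+2) = 2 P (n+1) + P n`. -/
def pell : ℕ → ℤ
  | 0 => 0
  | 1 => 1
  | (n + 2) => 2 * pell (n + 1) + pell n

/-! The odd-indexed Pell numbers satisfy `u (k+1) = 6 u k - u (k-1)`, which is exactly the Vieta
jump `(a, b) ↦ (b, 6b - a)` of the Markov form `a² + b² - 6ab`; so this form is constant along
consecutive odd-indexed Pell numbers, where it equals `1² + 5² - 6·1·5 = -4`. -/

theorem quadForm_eq_of_linearRecurrence {R : Type*} [CommRing R] (c : R) (x : ℕ → R)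
    (hx : ∀ k, x (k + 2) = c * x (k + 1) - x k) (k : ℕ) :
    x k ^ 2 + x (k + 1) ^ 2 - c * x k * x (k + 1) = x 0 ^ 2 + x 1 ^ 2 - c * x 0 * x 1 := by
  induction k with
  | zero => rfl
  | succ k ih => rw [← ih, hx]; ring

theorem pell_add_four (k : ℕ) : pell (k + 4) = 6 * pell (k + 2) - pell k := by
  rw [show k + 4 = k + 2 + 2 from rfl, pell, pell, pell]
  ring

theorem pell_odd_markovForm (m : ℕ) :
    pell (2 * m + 1) ^ 2 + pell (2 * m + 3) ^ 2 - 6 * pell (2 * m + 1) * pell (2 * m + 3) = -4 := by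
  have h := quadForm_eq_of_linearRecurrence 6 (fun k ↦ pell (2 * k + 1))
    (fun k ↦ pell_add_four (2 * k + 1)) m
  simpa [pell, mul_add, add_assoc] using h

/-- For all `n ≥ 1`, the triple `(2, P (2n-1), P (2n+1))` of Pell numbers satisfies
the Markov equation: `4 + P (2n-1)² + P (2n+1)² = 6 P (2n-1) P (2n+1)`. -/
theorem stmt16 : ∀ n : ℕ, 1 ≤ n →
    4 + pell (2 * n - 1) ^ 2 + pell (2 * n + 1) ^ 2
      = 6 * pell (2 * n - 1) * pell (2 * n + 1) := by
  rintro n hn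
  obtain ⟨m, rfl⟩ := Nat.exists_eq_add_of_le' hn
  rw [show 2 * (m + 1) - 1 = 2 * m + 1 by omega, show 2 * (m + 1) + 1 = 2 * m + 3 by ring]
  linarith [pell_odd_markovForm m]
end
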